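/- Let A be a convex subset of ℝ^p such that A ∩ 2A = ∅. Then (1/2)A ∩ 2A = ∅. -/
import Mathlib


open Pointwise

/-- Let `A ⊆ ℝ^p` be convex with `A ∩ 2A = ∅`. Then `(1/2)A ∩ 2A = ∅`. -/
theorem stmt_1 (p : ℕ) (A : Set (Fin p → ℝ)) (hA : Convex ℝ A)
    (h : A ∩ ((2 : ℝ) • A) = ∅) :
    ((2 : ℝ)⁻¹ • A) ∩ ((2 : ℝ) • A) = ∅ := by
  ext x
  simp only [Set.mem_inter_iff, Set.mem_empty_iff_false, iff_false, not_and]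
  rintro ⟨a, ha, rfl⟩ ⟨b, hb, hab⟩
  -- (2:ℝ)⁻¹ • a = 2 • b, so a = 4 • b
  have hab' : (2 : ℝ) • b = (2 : ℝ)⁻¹ • a := hab
  have ha4 : a = (4 : ℝ) • b := by
    have h2 := congrArg (fun y => (2 : ℝ) • y) hab'
    simp only [smul_smul] at h2
    norm_num at h2
    exact h2.symm


  have hc : (1/3 : ℝ) • a + (2/3 : ℝ) • b ∈ A :=
    hA ha hb (by norm_num) (by norm_num) (by norm_num)
  have hceq : (1/3 : ℝ) • a + (2/3 : ℝ) • b = (2 : ℝ) • b := by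
    rw [ha4]; module
  have : (2 : ℝ) • b ∈ A ∩ ((2 : ℝ) • A) := ⟨hceq ▸ hc, ⟨b, hb, rfl⟩⟩
  rw [h] at this
  exact this
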